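/- Let M > 0 and let E, F ≥ 0 be real numbers with |2F − E| < 1. Then there exists a twice continuously differentiable function g : [2M, ∞) → ℝ with g(s) > 0 for all s ≥ 2M, such that d/ds ( s(s − 2M) g′(s) ) = ( (E² − 1)/4 − 2MF²/s ) g(s) for all s ∈ [2M, ∞). -/

import Mathlib

/-!
Substituting `g(s) = s ^ (-F) * h(s)` turns the equation into the hypergeometric equation
`s (s - 2M) h'' + ((1 + a + b) s - (a + b) 2M) h' + a b h = 0` with `a = (1 + E - 2F) / 2` and
`b = (1 - E - 2F) / 2`. As `0 < a < 1`, Euler's integral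
`h(s) = ∫₀¹ t ^ (a - 1) (1 - t) ^ (-a) ((1 - t) 2M + t s) ^ (-b) dt` converges; it is positive
and, differentiating under the integral sign, smooth for `s > 0`. It solves the hypergeometric
equation because the corresponding combination of integrands is the `t`-derivative of
`2M b t ^ a (1 - t) ^ (1 - a) ((1 - t) 2M + t s) ^ (-b - 1)`, which vanishes at `t = 0` and `t = 1`.
-/

open Set MeasureTheory Filter Topology

lemma rpow_le_max_rpow {m q R : ℝ} (hm : 0 < m) (hmq : m ≤ q) (hqR : q ≤ R) (e : ℝ) :
    q ^ e ≤ max (m ^ e) (R ^ e) := by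
  rcases le_or_gt 0 e with he | he
  · exact le_max_of_le_right (Real.rpow_le_rpow (hm.le.trans hmq) hqR he)
  · exact le_max_of_le_left (Real.rpow_le_rpow_of_nonpos hm hmq he.le)

lemma rpow_eq_rpow_sub_one_mul {x : ℝ} (hx : x ≠ 0) (y : ℝ) : x ^ y = x ^ (y - 1) * x := by
  rw [Real.rpow_sub_one hx, div_mul_cancel₀ _ hx]

lemma intervalIntegrable_rpow_mul_one_sub_rpow {u v : ℝ} (hu : 0 < u) (hv : 0 < v) :
    IntervalIntegrable (fun t : ℝ => t ^ (u - 1) * (1 - t) ^ (v - 1)) volume 0 1 := by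
  have h := (Complex.betaIntegral_convergent (u := u) (v := v) (by simpa) (by simpa)).norm
  refine h.congr ?_
  intro t ht
  rw [uIoc_of_le zero_le_one] at ht
  have h1 : (0:ℝ) ≤ 1 - t := sub_nonneg.2 ht.2
  have hcast : ((t ^ (u - 1) * (1 - t) ^ (v - 1) : ℝ) : ℂ)
      = (t : ℂ) ^ ((u : ℂ) - 1) * (1 - (t : ℂ)) ^ ((v : ℂ) - 1) := by
    rw [Complex.ofReal_mul, Complex.ofReal_cpow ht.1.le, Complex.ofReal_cpow h1]
    push_cast
    rfl
  dsimp only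
  rw [← hcast, Complex.norm_real,
    Real.norm_of_nonneg (mul_nonneg (Real.rpow_nonneg ht.1.le _) (Real.rpow_nonneg h1 _))]

noncomputable def eulerIntegral (w : ℝ → ℝ) (p e x : ℝ) : ℝ :=
  ∫ t in (0:ℝ)..1, w t * ((1 - t) * p + t * x) ^ e

lemma min_le_one_sub_mul_add_mul {p x t : ℝ} (ht : t ∈ Icc (0:ℝ) 1) :
    min p x ≤ (1 - t) * p + t * x :=
  Convex.min_le_combo p x (sub_nonneg.2 ht.2) ht.1 (sub_add_cancel 1 t)

lemma one_sub_mul_add_mul_le_max {p x t : ℝ} (ht : t ∈ Icc (0:ℝ) 1) :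
    (1 - t) * p + t * x ≤ max p x :=
  Convex.combo_le_max p x (sub_nonneg.2 ht.2) ht.1 (sub_add_cancel 1 t)

lemma one_sub_mul_add_mul_pos {p x t : ℝ} (hp : 0 < p) (hx : 0 < x) (ht : t ∈ Icc (0:ℝ) 1) :
    0 < (1 - t) * p + t * x :=
  (lt_min hp hx).trans_le (min_le_one_sub_mul_add_mul ht)

section EulerIntegral

variable {w : ℝ → ℝ} {p : ℝ}

lemma intervalIntegrable_mul_one_sub_mul_add_mul_rpow (hw : IntervalIntegrable w volume 0 1)
    (hp : 0 < p) {x : ℝ} (hx : 0 < x) (e : ℝ) :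
    IntervalIntegrable (fun t => w t * ((1 - t) * p + t * x) ^ e) volume 0 1 := by
  refine hw.mul_continuousOn (ContinuousOn.rpow_const (by fun_prop) fun t ht => Or.inl ?_)
  rw [uIcc_of_le zero_le_one] at ht
  exact (one_sub_mul_add_mul_pos hp hx ht).ne'

lemma hasDerivAt_eulerIntegral (hw : IntervalIntegrable w volume 0 1) (hp : 0 < p) (e : ℝ)
    {x : ℝ} (hx : 0 < x) :
    HasDerivAt (eulerIntegral w p e) (e * eulerIntegral (fun t => t * w t) p (e - 1) x) x := by
  set m := min p (x / 2)
  set R := max p (3 * x / 2)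
  have hm : 0 < m := lt_min hp (half_pos hx)
  have hball : ∀ y ∈ Metric.ball x (x / 2), ∀ t ∈ Icc (0:ℝ) 1,
      m ≤ (1 - t) * p + t * y ∧ (1 - t) * p + t * y ≤ R := by
    intro y hy t ht
    rw [Metric.mem_ball, Real.dist_eq, abs_lt] at hy
    exact ⟨(min_le_min_left p (by linarith)).trans (min_le_one_sub_mul_add_mul ht),
      (one_sub_mul_add_mul_le_max ht).trans (max_le_max_left p (by linarith))⟩
  have hmeas : ∀ (v : ℝ → ℝ) (f : ℝ), IntervalIntegrable v volume 0 1 → ∀ y : ℝ,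
      AEStronglyMeasurable (fun t => v t * ((1 - t) * p + t * y) ^ f)
        (volume.restrict (uIoc 0 1)) := fun v f hv y =>
    hv.def'.aestronglyMeasurable.mul (by fun_prop : Measurable _).aestronglyMeasurable
  have hw' : IntervalIntegrable (fun t => t * w t) volume 0 1 :=
    hw.continuousOn_mul (continuousOn_id' _)
  have key := intervalIntegral.hasDerivAt_integral_of_dominated_loc_of_deriv_le
    (F' := fun y t => e * (t * w t * ((1 - t) * p + t * y) ^ (e - 1)))
    (bound := fun t => |e| * max (m ^ (e - 1)) (R ^ (e - 1)) * ‖w t‖)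
    (Metric.ball_mem_nhds x (half_pos hx)) (Eventually.of_forall (hmeas w e hw))
    (intervalIntegrable_mul_one_sub_mul_add_mul_rpow hw hp hx e)
    ((hmeas _ _ hw' x).const_mul e) ?_ (hw.norm.const_mul _) ?_
  · have hderiv := key.2
    rw [intervalIntegral.integral_const_mul] at hderiv
    exact hderiv
  · refine Eventually.of_forall fun t ht y hy => ?_
    rw [uIoc_of_le zero_le_one] at ht
    obtain ⟨hQm, hQR⟩ := hball y hy t (Ioc_subset_Icc_self ht)
    have hQ := rpow_le_max_rpow hm hQm hQR (e - 1)
    calc ‖e * (t * w t * ((1 - t) * p + t * y) ^ (e - 1))‖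
        = |e| * (t * ‖w t‖ * ((1 - t) * p + t * y) ^ (e - 1)) := by
          rw [norm_mul, norm_mul, norm_mul, Real.norm_of_nonneg ht.1.le,
            Real.norm_of_nonneg (Real.rpow_nonneg (hm.le.trans hQm) _), Real.norm_eq_abs]
      _ ≤ |e| * (1 * ‖w t‖ * max (m ^ (e - 1)) (R ^ (e - 1))) := by
          gcongr
          · exact Real.rpow_nonneg (hm.le.trans hQm) _
          · exact ht.2
      _ = _ := by ring
  · refine Eventually.of_forall fun t ht y hy => ?_
    rw [uIoc_of_le zero_le_one] at ht
    have hQ := hm.trans_le (hball y hy t (Ioc_subset_Icc_self ht)).1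
    have hlin : HasDerivAt (fun y => (1 - t) * p + t * y) t y :=
      (((hasDerivAt_id' y).const_mul t).const_add ((1 - t) * p)).congr_deriv (mul_one t)
    refine ((hlin.rpow_const (p := e) (Or.inl hQ.ne')).const_mul (w t)).congr_deriv ?_
    ring

lemma contDiffOn_eulerIntegral (hw : IntervalIntegrable w volume 0 1) (hp : 0 < p) (e : ℝ)
    (n : ℕ) : ContDiffOn ℝ n (eulerIntegral w p e) (Ioi 0) := by
  induction n generalizing w e with
  | zero =>
    exact contDiffOn_zero.2 fun x hx =>
      (hasDerivAt_eulerIntegral hw hp e hx).continuousAt.continuousWithinAt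
  | succ n ih =>
    rw [Nat.cast_succ, contDiffOn_succ_iff_deriv_of_isOpen isOpen_Ioi]
    refine ⟨fun x hx =>
      (hasDerivAt_eulerIntegral hw hp e hx).differentiableAt.differentiableWithinAt, by simp, ?_⟩
    exact ((ih (hw.continuousOn_mul (continuousOn_id' _)) (e - 1)).const_smul e).congr
      fun x hx => (hasDerivAt_eulerIntegral hw hp e hx).deriv

lemma eulerIntegral_pos (hw : IntervalIntegrable w volume 0 1)
    (hw_pos : ∀ t ∈ Ioo (0:ℝ) 1, 0 < w t) (hp : 0 < p) (e : ℝ) {x : ℝ} (hx : 0 < x) :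
    0 < eulerIntegral w p e x :=
  intervalIntegral.intervalIntegral_pos_of_pos_on
    (intervalIntegrable_mul_one_sub_mul_add_mul_rpow hw hp hx e) (fun t ht => mul_pos (hw_pos t ht)
      (Real.rpow_pos_of_pos (one_sub_mul_add_mul_pos hp hx (Ioo_subset_Icc_self ht)) e)) one_pos

end EulerIntegral

/-- By Euler's integral representation,
`eulerIntegral (eulerWeight a) p (-b) x = p ^ (-b) * B(a, 1 - a) * ₂F₁(b, a; 1; 1 - x / p)`. -/
noncomputable def eulerWeight (a t : ℝ) : ℝ := t ^ (a - 1) * (1 - t) ^ (-a)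

lemma intervalIntegrable_eulerWeight {a : ℝ} (ha0 : 0 < a) (ha1 : a < 1) :
    IntervalIntegrable (eulerWeight a) volume 0 1 := by
  have h := intervalIntegrable_rpow_mul_one_sub_rpow ha0 (sub_pos.2 ha1)
  simp only [sub_sub_cancel_left] at h
  exact h

lemma eulerWeight_pos (a : ℝ) {t : ℝ} (ht : t ∈ Ioo (0:ℝ) 1) : 0 < eulerWeight a t :=
  mul_pos (Real.rpow_pos_of_pos ht.1 _) (Real.rpow_pos_of_pos (sub_pos.2 ht.2) _)

lemma hasDerivAt_eulerPrimitive {a b p s t : ℝ} (ht : t ∈ Ioo (0:ℝ) 1)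
    (hQ : 0 < (1 - t) * p + t * s) :
    HasDerivAt (fun u => p * b * (u ^ a * (1 - u) ^ (1 - a) * ((1 - u) * p + u * s) ^ (-b - 1)))
      (s * (s - p) * ((-b) * (-b - 1)) *
          (t * (t * eulerWeight a t) * ((1 - t) * p + t * s) ^ (-b - 1 - 1))
        + ((1 + a + b) * s - (a + b) * p) * (-b) *
          (t * eulerWeight a t * ((1 - t) * p + t * s) ^ (-b - 1))
        + a * b * (eulerWeight a t * ((1 - t) * p + t * s) ^ (-b))) t := by
  have ht1 : 0 < 1 - t := sub_pos.2 ht.2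
  have hpow : HasDerivAt (fun u : ℝ => u ^ a) (a * t ^ (a - 1)) t :=
    Real.hasDerivAt_rpow_const (Or.inl ht.1.ne')
  have hpow' := ((hasDerivAt_id' t).const_sub 1).rpow_const (p := 1 - a) (Or.inl ht1.ne')
  have hlin : HasDerivAt (fun u => (1 - u) * p + u * s) (s - p) t :=
    ((((hasDerivAt_id' t).const_sub 1).mul_const p).add
      ((hasDerivAt_id' t).mul_const s)).congr_deriv (by ring)
  have hQpow := hlin.rpow_const (p := -b - 1) (Or.inl hQ.ne')
  refine (((hpow.mul hpow').mul hQpow).const_mul (p * b)).congr_deriv ?_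
  simp only [Pi.mul_apply]
  rw [eulerWeight, rpow_eq_rpow_sub_one_mul ht.1.ne' a, rpow_eq_rpow_sub_one_mul ht1.ne' (1 - a),
    rpow_eq_rpow_sub_one_mul hQ.ne' (-b), rpow_eq_rpow_sub_one_mul hQ.ne' (-b - 1),
    sub_sub_cancel_left]
  ring

theorem eulerIntegral_eulerWeight_hypergeometric {a b p s : ℝ} (ha0 : 0 < a) (ha1 : a < 1)
    (hp : 0 < p) (hs : 0 < s) :
    s * (s - p) * ((-b) * ((-b - 1) *
        eulerIntegral (fun t => t * (t * eulerWeight a t)) p (-b - 1 - 1) s))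
      + ((1 + a + b) * s - (a + b) * p) *
        ((-b) * eulerIntegral (fun t => t * eulerWeight a t) p (-b - 1) s)
      + a * b * eulerIntegral (eulerWeight a) p (-b) s = 0 := by
  have hw := intervalIntegrable_eulerWeight ha0 ha1
  have hw₁ : IntervalIntegrable (fun t => t * eulerWeight a t) volume 0 1 :=
    hw.continuousOn_mul (continuousOn_id' _)
  have hw₂ : IntervalIntegrable (fun t => t * (t * eulerWeight a t)) volume 0 1 :=
    hw₁.continuousOn_mul (continuousOn_id' _)
  have hi₂ := (intervalIntegrable_mul_one_sub_mul_add_mul_rpow hw₂ hp hs (-b - 1 - 1)).const_mul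
    (s * (s - p) * ((-b) * (-b - 1)))
  have hi₁ := (intervalIntegrable_mul_one_sub_mul_add_mul_rpow hw₁ hp hs (-b - 1)).const_mul
    (((1 + a + b) * s - (a + b) * p) * (-b))
  have hi₀ := (intervalIntegrable_mul_one_sub_mul_add_mul_rpow hw hp hs (-b)).const_mul (a * b)
  have hprim_cont : ContinuousOn
      (fun u => p * b * (u ^ a * (1 - u) ^ (1 - a) * ((1 - u) * p + u * s) ^ (-b - 1)))
      (Icc 0 1) := by
    refine continuousOn_const.mul (ContinuousOn.mul (by fun_prop (disch := linarith))
      (ContinuousOn.rpow_const (by fun_prop) fun u hu =>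
        Or.inl (one_sub_mul_add_mul_pos hp hs hu).ne'))
  have hftc := intervalIntegral.integral_eq_sub_of_hasDerivAt_of_le zero_le_one hprim_cont
    (fun t ht => hasDerivAt_eulerPrimitive ht
      (one_sub_mul_add_mul_pos hp hs (Ioo_subset_Icc_self ht)))
    ((hi₂.add hi₁).add hi₀)
  rw [intervalIntegral.integral_add (hi₂.add hi₁) hi₀,
    intervalIntegral.integral_add hi₂ hi₁, intervalIntegral.integral_const_mul,
    intervalIntegral.integral_const_mul, intervalIntegral.integral_const_mul] at hftc
  simp only [neg_mul, mul_neg, Real.one_rpow, sub_self, Real.zero_rpow ha0.ne',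
    Real.zero_rpow (sub_pos.2 ha1).ne', mul_zero, zero_mul, one_mul, zero_add, sub_zero, mul_one,
    add_zero] at hftc
  simp only [eulerIntegral]
  linear_combination hftc

theorem deriv_mul_deriv_rpow_mul {p F lam s h'' : ℝ} {h h' : ℝ → ℝ} (hs : 0 < s)
    (hh : ∀ᶠ x in 𝓝 s, HasDerivAt h (h' x) x) (hh' : HasDerivAt h' h'' s)
    (hode : s * (s - p) * h'' + ((2 - 2 * F) * s - (1 - 2 * F) * p) * h' s
      + (F ^ 2 - F - lam) * h s = 0) :
    deriv (fun t => t * (t - p) * deriv (fun x => x ^ (-F) * h x) t) s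
      = (lam - p * F ^ 2 / s) * (s ^ (-F) * h s) := by
  have hderiv : ∀ᶠ x in 𝓝 s, deriv (fun x => x ^ (-F) * h x) x
      = -F * x ^ (-F - 1) * h x + x ^ (-F) * h' x := by
    filter_upwards [hh, Ioi_mem_nhds hs] with x hx hx0
    exact ((Real.hasDerivAt_rpow_const (Or.inl (ne_of_gt hx0))).mul hx).deriv
  have hflux : HasDerivAt (fun t => t * (t - p) * (-F * t ^ (-F - 1) * h t + t ^ (-F) * h' t))
      ((2 * s - p) * (-F * s ^ (-F - 1) * h s + s ^ (-F) * h' s) + s * (s - p) *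
        (-F * (-F - 1) * s ^ (-F - 1 - 1) * h s + 2 * (-F * s ^ (-F - 1) * h' s)
          + s ^ (-F) * h'')) s := by
    have hweight := (hasDerivAt_id' s).mul ((hasDerivAt_id' s).sub_const p)
    have hg' := (((Real.hasDerivAt_rpow_const (p := -F - 1) (Or.inl hs.ne')).const_mul (-F)).mul
      hh.self_of_nhds).add ((Real.hasDerivAt_rpow_const (p := -F) (Or.inl hs.ne')).mul hh')
    refine (hweight.mul hg').congr_deriv ?_
    simp only [Pi.mul_apply, Pi.add_apply]
    ring
  have hev : (fun t => t * (t - p) * deriv (fun x => x ^ (-F) * h x) t)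
      =ᶠ[𝓝 s] fun t => t * (t - p) * (-F * t ^ (-F - 1) * h t + t ^ (-F) * h' t) := by
    filter_upwards [hderiv] with x hx
    rw [hx]
  rw [hev.deriv_eq, hflux.deriv, Real.rpow_sub_one hs.ne' (-F - 1),
    Real.rpow_sub_one hs.ne' (-F)]
  field_simp
  linear_combination s * hode

theorem deriv_mul_deriv_rpow_mul_eulerIntegral {a b p F lam s : ℝ} (ha0 : 0 < a) (ha1 : a < 1)
    (hp : 0 < p) (hs : 0 < s) (hab : a + b = 1 - 2 * F) (hab' : a * b = F ^ 2 - F - lam) :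
    deriv (fun t => t * (t - p) *
        deriv (fun x => x ^ (-F) * eulerIntegral (eulerWeight a) p (-b) x) t) s
      = (lam - p * F ^ 2 / s) * (s ^ (-F) * eulerIntegral (eulerWeight a) p (-b) s) := by
  have hw := intervalIntegrable_eulerWeight ha0 ha1
  refine deriv_mul_deriv_rpow_mul hs
    (eventually_of_mem (Ioi_mem_nhds hs) fun x hx => hasDerivAt_eulerIntegral hw hp _ hx)
    ((hasDerivAt_eulerIntegral (hw.continuousOn_mul (continuousOn_id' _)) hp _ hs).const_mul _) ?_
  have hode := eulerIntegral_eulerWeight_hypergeometric (b := b) ha0 ha1 hp hs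
  rw [add_assoc 1 a b, hab, hab'] at hode
  linear_combination hode

theorem exists_positive_solution_hardy_ode
    (M E F : ℝ) (hM : 0 < M)
    (hEF : |2*F - E| < 1) :
    ∃ g : ℝ → ℝ, ContDiffOn ℝ 2 g (Ici (2*M)) ∧
      (∀ s ∈ Ici (2*M), 0 < g s) ∧
      (∀ s ∈ Ici (2*M),
        deriv (fun t => t*(t - 2*M) * deriv g t) s
          = ((E^2 - 1)/4 - 2*M*F^2/s) * g s) := by
  obtain ⟨hEF₁, hEF₂⟩ := abs_lt.mp hEF
  have ha0 : 0 < (1 + E - 2 * F) / 2 := by linarith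
  have ha1 : (1 + E - 2 * F) / 2 < 1 := by linarith
  have hp : 0 < 2 * M := by linarith
  have hw := intervalIntegrable_eulerWeight ha0 ha1
  have hpos : Ici (2 * M) ⊆ Ioi 0 := Ici_subset_Ioi.2 hp
  refine ⟨fun x => x ^ (-F) *
    eulerIntegral (eulerWeight ((1 + E - 2 * F) / 2)) (2 * M) (-((1 - E - 2 * F) / 2)) x,
    ?_, fun s hs => ?_, fun s hs => ?_⟩
  · refine (ContDiffOn.mul (fun x hx => ?_) (contDiffOn_eulerIntegral hw hp _ 2)).mono hpos
    exact (Real.contDiffAt_rpow_const_of_ne (ne_of_gt hx)).contDiffWithinAt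
  · exact mul_pos (Real.rpow_pos_of_pos (hpos hs) _)
      (eulerIntegral_pos hw (fun t => eulerWeight_pos _) hp _ (hpos hs))
  · exact deriv_mul_deriv_rpow_mul_eulerIntegral ha0 ha1 hp (hpos hs) (by ring) (by ring)
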